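/- arXiv:2201.11146 — 3 statements merged into one kernel-verified Lean document; each statement's English description precedes it below -/
import Mathlib

section
/- For an integrable function u : ℝ → ℝ with finite second absolute moment and an integrable kernel ω on [−δ,δ] satisfying ∫_{-δ}^{δ} ω(ξ) ξ dξ = 0, the second moment of the nonlocal operator satisfies ∫_ℝ x² · (∫_{-δ}^{δ} ω(ξ)(u(x+ξ) − u(x)) dξ) dx = (∫_ℝ u(z) dz) · (∫_{-δ}^{δ} ω(ξ) ξ² dξ). -/
open MeasureTheory intervalIntegral

/-- Second-moment identity for the nonlocal operator under the non-advective constraint. -/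
theorem stmt_3 (δ : ℝ) (hδ : 0 < δ) (ω u : ℝ → ℝ)
    (hu : Integrable u)
    (hmom1 : Integrable (fun x => |x| * |u x|))
    (hmom2 : Integrable (fun x => x ^ 2 * |u x|))
    (hω : IntegrableOn ω (Set.Icc (-δ) δ))
    (hω1 : IntegrableOn (fun ξ => ω ξ * ξ) (Set.Icc (-δ) δ))
    (hω2 : IntegrableOn (fun ξ => ω ξ * ξ ^ 2) (Set.Icc (-δ) δ))
    (hfub : IntegrableOn (fun p : ℝ × ℝ => p.1 ^ 2 * (ω p.2 * (u (p.1 + p.2) - u p.1)))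
      (Set.univ ×ˢ Set.Icc (-δ) δ))
    (hconstraint : (∫ ξ in (-δ)..δ, ω ξ * ξ) = 0) :
    (∫ x, x ^ 2 * ∫ ξ in (-δ)..δ, ω ξ * (u (x + ξ) - u x)) =
      (∫ z, u z) * ∫ ξ in (-δ)..δ, ω ξ * ξ ^ 2 := by
  have hle : (-δ) ≤ δ := by linarith
  set M0 := ∫ z, u z with hM0
  set M1 := ∫ z, z * u z with hM1
  set M2 := ∫ z, z ^ 2 * u z with hM2
  -- integrability of moments
  have hu1 : Integrable (fun z => z * u z) := by
    refine hmom1.mono' ?_ ?_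
    · exact (measurable_id.aestronglyMeasurable.aemeasurable.mul
        hu.aestronglyMeasurable.aemeasurable).aestronglyMeasurable
    · filter_upwards with z
      simp [abs_mul]
  have hu2 : Integrable (fun z => z ^ 2 * u z) := by
    refine hmom2.mono' ?_ ?_
    · exact ((measurable_id.pow_const 2).aestronglyMeasurable.aemeasurable.mul
        hu.aestronglyMeasurable.aemeasurable).aestronglyMeasurable
    · filter_upwards with z
      simp [abs_mul, abs_of_nonneg (sq_nonneg z), sq_abs]
  -- translate interval integrals to Icc set integrals
  have hInt : ∀ ξ : ℝ, Integrable (fun x => x ^ 2 * u (x + ξ)) := by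
    intro ξ
    have hg : Integrable (fun z => (z - ξ) ^ 2 * u z) := by
      have : (fun z => (z - ξ) ^ 2 * u z)
          = fun z => (z ^ 2 * u z - (2 * ξ) * (z * u z)) + ξ ^ 2 * u z := by
        funext z; ring
      rw [this]
      exact (hu2.sub (hu1.const_mul _)).add (hu.const_mul _)
    have := hg.comp_add_right ξ
    simpa using this
  -- key translation identity
  have hkey : ∀ ξ : ℝ, (∫ x, x ^ 2 * u (x + ξ)) = M2 - 2 * ξ * M1 + ξ ^ 2 * M0 := by
    intro ξ
    have h1 : (∫ x, (fun z => (z - ξ) ^ 2 * u z) (x + ξ)) = ∫ z, (z - ξ) ^ 2 * u z :=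
      integral_add_right_eq_self (μ := volume) (fun z => (z - ξ) ^ 2 * u z) ξ
    have h2 : (∫ x, x ^ 2 * u (x + ξ)) = ∫ z, (z - ξ) ^ 2 * u z := by
      rw [← h1]; congr 1; funext x; ring_nf
    rw [h2]
    have : (fun z => (z - ξ) ^ 2 * u z)
        = fun z => (z ^ 2 * u z - (2 * ξ) * (z * u z)) + ξ ^ 2 * u z := by
      funext z; ring
    have hA : Integrable (fun z => z ^ 2 * u z - 2 * ξ * (z * u z)) :=
      hu2.sub (hu1.const_mul _)
    rw [this, integral_add hA (hu.const_mul _),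
      integral_sub hu2 (hu1.const_mul _), MeasureTheory.integral_const_mul,
      MeasureTheory.integral_const_mul]
  -- inner integral formula
  have hinner : ∀ ξ : ℝ, (∫ x, x ^ 2 * (ω ξ * (u (x + ξ) - u x)))
      = ω ξ * (ξ ^ 2 * M0 - 2 * ξ * M1) := by
    intro ξ
    have : (fun x => x ^ 2 * (ω ξ * (u (x + ξ) - u x)))
        = fun x => ω ξ * (x ^ 2 * u (x + ξ) - x ^ 2 * u x) := by
      funext x; ring
    rw [this, MeasureTheory.integral_const_mul, integral_sub (hInt ξ) hu2, hkey ξ]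
    ring
  -- Fubini swap
  have hieq : ∀ g : ℝ → ℝ, IntegrableOn g (Set.Icc (-δ) δ) →
      (∫ ξ in (-δ)..δ, g ξ) = ∫ ξ in Set.Icc (-δ) δ, g ξ := by
    intro g _
    rw [intervalIntegral.integral_of_le hle, ← integral_Icc_eq_integral_Ioc]
  have hprod : Integrable (fun p : ℝ × ℝ => p.1 ^ 2 * (ω p.2 * (u (p.1 + p.2) - u p.1)))
      (Measure.prod volume (volume.restrict (Set.Icc (-δ) δ))) := by
    have := hfub
    rw [IntegrableOn, Measure.volume_eq_prod, ← Measure.prod_restrict,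
      Measure.restrict_univ] at this
    exact this
  have hswap : (∫ x, ∫ ξ in Set.Icc (-δ) δ, x ^ 2 * (ω ξ * (u (x + ξ) - u x)))
      = ∫ ξ in Set.Icc (-δ) δ, ∫ x, x ^ 2 * (ω ξ * (u (x + ξ) - u x)) :=
    integral_integral_swap hprod
  -- put everything together
  have hLHS : (∫ x, x ^ 2 * ∫ ξ in (-δ)..δ, ω ξ * (u (x + ξ) - u x))
      = ∫ x, ∫ ξ in Set.Icc (-δ) δ, x ^ 2 * (ω ξ * (u (x + ξ) - u x)) := by
    congr 1; funext x
    rw [intervalIntegral.integral_of_le hle, ← integral_Icc_eq_integral_Ioc,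
      ← MeasureTheory.integral_const_mul]
  rw [hLHS, hswap]
  have hrw : (∫ ξ in Set.Icc (-δ) δ, ∫ x, x ^ 2 * (ω ξ * (u (x + ξ) - u x)))
      = ∫ ξ in Set.Icc (-δ) δ, (M0 * (ω ξ * ξ ^ 2) - (2 * M1) * (ω ξ * ξ)) := by
    congr 1; funext ξ; rw [hinner ξ]; ring
  rw [hrw, integral_sub (hω2.const_mul _) (hω1.const_mul _),
    MeasureTheory.integral_const_mul, MeasureTheory.integral_const_mul]
  rw [hieq _ hω1] at hconstraint
  rw [hconstraint, hieq _ hω2]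
  ring
end

section
/- Suppose c(·,t) solves the nonlocal diffusion equation with a time-independent kernel ω(ξ) satisfying the non-advective constraint ∫_{-δ}^{δ} ω(ξ) ξ dξ = 0, with total mass C > 0. Then the mean squared displacement MSD(t) = (1/C) ∫ (x − x₀)² c(x,t) dx is an affine (linear) function of time: MSD(t) = MSD(0) + t · ∫_{-δ}^{δ} ω(ξ) ξ² dξ. -/
/-!
Testing the equation against `(x - x₀)²` and swapping the integrals, translation invariance of
Lebesgue measure gives `∫ (x - x₀)² (c(x + ξ) - c(x)) dx = ξ² M₀ - 2ξ M₁` with `M₀ = C` the mass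
and `M₁` the first moment about `x₀`. Integrating against `ω`, the non-advective constraint kills
the `M₁` term, so the second moment has the constant derivative `C ∫ ω ξ² dξ`.
-/

open MeasureTheory Set Function

section Moments

variable {f : ℝ → ℝ} {a : ℝ}

lemma integrable_sub_mul_of_integrable_sq_sub_mul (hf : Integrable f)
    (hf2 : Integrable fun x => (x - a) ^ 2 * f x) :
    Integrable fun x => (x - a) * f x := by
  refine (hf.abs.add hf2.abs).mono' ((by fun_prop : Continuous fun x => x - a)
    |>.aestronglyMeasurable.mul hf.aestronglyMeasurable) (.of_forall fun x => ?_)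
  simp only [Pi.add_apply, Real.norm_eq_abs, abs_mul, abs_pow, sq_abs]
  -- |y| ≤ 1 + y²
  nlinarith [sq_nonneg (|x - a| - 1), abs_nonneg (f x), abs_nonneg (x - a), sq_abs (x - a)]

lemma integral_sq_sub_mul_comp_add_sub (hf : Integrable f)
    (hf2 : Integrable fun x => (x - a) ^ 2 * f x) (ξ : ℝ) :
    ∫ x, (x - a) ^ 2 * (f (x + ξ) - f x) =
      ξ ^ 2 * (∫ x, f x) - 2 * ξ * ∫ x, (x - a) * f x := by
  have hf1 := integrable_sub_mul_of_integrable_sq_sub_mul hf hf2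
  have hsq : Integrable fun y => (y - (a + ξ)) ^ 2 * f y := by
    refine ((hf2.sub (hf1.const_mul (2 * ξ))).add (hf.const_mul (ξ ^ 2))).congr
      (.of_forall fun y => ?_)
    simp only [Pi.add_apply, Pi.sub_apply]; ring
  have hshift : Integrable fun x => (x - a) ^ 2 * f (x + ξ) :=
    (hsq.comp_add_right ξ).congr (.of_forall fun x => by ring_nf)
  have hsubst : ∫ x, (x - a) ^ 2 * f (x + ξ) = ∫ y, (y - (a + ξ)) ^ 2 * f y := by
    rw [← integral_add_right_eq_self (fun y => (y - (a + ξ)) ^ 2 * f y) ξ]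
    congr 1 with x
    ring_nf
  calc ∫ x, (x - a) ^ 2 * (f (x + ξ) - f x)
      = (∫ x, (x - a) ^ 2 * f (x + ξ)) - ∫ x, (x - a) ^ 2 * f x := by
        rw [← integral_sub hshift hf2]; simp only [mul_sub]
    _ = ∫ y, ((y - (a + ξ)) ^ 2 - (y - a) ^ 2) * f y := by
        rw [hsubst, ← integral_sub hsq hf2]
        congr 1 with y; ring
    _ = ∫ y, (ξ ^ 2 * f y - 2 * ξ * ((y - a) * f y)) := by
        congr 1 with y; ring
    _ = ξ ^ 2 * (∫ x, f x) - 2 * ξ * ∫ x, (x - a) * f x := by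
        rw [integral_sub (hf.const_mul _) (hf1.const_mul _), integral_const_mul,
          integral_const_mul]

end Moments

lemma integral_intervalIntegral_comm {E : Type*} [NormedAddCommGroup E] [NormedSpace ℝ E]
    {F : ℝ → ℝ → E} {a b : ℝ} (hab : a ≤ b)
    (hF : IntegrableOn (uncurry F) (univ ×ˢ Icc a b)) :
    ∫ x, ∫ ξ in a..b, F x ξ = ∫ ξ in a..b, ∫ x, F x ξ := by
  have hF' : Integrable (uncurry F) (volume.prod (volume.restrict (Ioc a b))) := by
    have := hF.mono_set (prod_mono_right Ioc_subset_Icc_self)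
    rwa [IntegrableOn, Measure.volume_eq_prod, ← Measure.prod_restrict, Measure.restrict_univ]
      at this
  simp_rw [intervalIntegral.integral_of_le hab]
  exact integral_integral_swap hF'

lemma eq_add_mul_of_hasDerivAt_const {g : ℝ → ℝ} {k : ℝ} (hg : ∀ t, HasDerivAt g k t) (t : ℝ) :
    g t = g 0 + t * k := by
  have h0 : ∀ s, HasDerivAt (fun s => g s - s * k) 0 s := fun s =>
    ((hg s).sub ((hasDerivAt_id' s).mul_const k)).congr_deriv (by ring)
  have := is_const_of_deriv_eq_zero (fun s => (h0 s).differentiableAt) (fun s => (h0 s).deriv) t 0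
  simp only [zero_mul, sub_zero] at this
  linarith

lemma integral_sq_sub_mul_intervalIntegral_kernel {ω f : ℝ → ℝ} {a l u : ℝ} (hlu : l ≤ u)
    (hω1 : IntervalIntegrable (fun ξ => ω ξ * ξ) volume l u)
    (hω2 : IntervalIntegrable (fun ξ => ω ξ * ξ ^ 2) volume l u)
    (hf : Integrable f) (hf2 : Integrable fun x => (x - a) ^ 2 * f x)
    (hfub : IntegrableOn (fun p : ℝ × ℝ => (p.1 - a) ^ 2 * (ω p.2 * (f (p.1 + p.2) - f p.1)))
      (univ ×ˢ Icc l u)) :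
    ∫ x, (x - a) ^ 2 * ∫ ξ in l..u, ω ξ * (f (x + ξ) - f x) =
      (∫ x, f x) * (∫ ξ in l..u, ω ξ * ξ ^ 2) -
        2 * (∫ x, (x - a) * f x) * ∫ ξ in l..u, ω ξ * ξ := by
  calc ∫ x, (x - a) ^ 2 * ∫ ξ in l..u, ω ξ * (f (x + ξ) - f x)
      = ∫ x, ∫ ξ in l..u, (x - a) ^ 2 * (ω ξ * (f (x + ξ) - f x)) := by
        simp only [intervalIntegral.integral_const_mul]
    _ = ∫ ξ in l..u, ∫ x, (x - a) ^ 2 * (ω ξ * (f (x + ξ) - f x)) :=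
        integral_intervalIntegral_comm hlu hfub
    _ = ∫ ξ in l..u, ω ξ * (ξ ^ 2 * (∫ x, f x) - 2 * ξ * ∫ x, (x - a) * f x) := by
        congr 1 with ξ
        simp only [mul_left_comm _ (ω ξ), integral_const_mul,
          integral_sq_sub_mul_comp_add_sub hf hf2]
    _ = (∫ x, f x) * (∫ ξ in l..u, ω ξ * ξ ^ 2) -
        2 * (∫ x, (x - a) * f x) * ∫ ξ in l..u, ω ξ * ξ := by
        rw [← intervalIntegral.integral_const_mul, ← intervalIntegral.integral_const_mul,
          ← intervalIntegral.integral_sub (hω2.const_mul _) (hω1.const_mul _)]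
        congr 1 with ξ
        ring

theorem stmt_4_general (δ : ℝ) (hδ : 0 < δ) (ω : ℝ → ℝ) (c : ℝ → ℝ → ℝ) (x₀ C : ℝ) (hC : 0 < C)
    (hω : IntegrableOn ω (Set.Icc (-δ) δ))
    (hω2 : IntegrableOn (fun ξ => ω ξ * ξ ^ 2) (Set.Icc (-δ) δ))
    (hconstraint : (∫ ξ in (-δ)..δ, ω ξ * ξ) = 0)
    (hint : ∀ t, Integrable (fun x => c x t))
    (hmom2 : ∀ t, Integrable (fun x => (x - x₀) ^ 2 * c x t))
    (hmass : ∀ t, (∫ x, c x t) = C)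
    (hdiff : ∀ t, HasDerivAt (fun s => ∫ x, (x - x₀) ^ 2 * c x s)
      (∫ x, (x - x₀) ^ 2 * ∫ ξ in (-δ)..δ, ω ξ * (c (x + ξ) t - c x t)) t)
    (hfub : ∀ t, IntegrableOn
      (fun p : ℝ × ℝ => (p.1 - x₀) ^ 2 * (ω p.2 * (c (p.1 + p.2) t - c p.1 t)))
      (Set.univ ×ˢ Set.Icc (-δ) δ)) :
    ∀ t : ℝ, (1 / C) * (∫ x, (x - x₀) ^ 2 * c x t) =
      (1 / C) * (∫ x, (x - x₀) ^ 2 * c x 0) + t * ∫ ξ in (-δ)..δ, ω ξ * ξ ^ 2 := by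
  have hδ' : -δ ≤ δ := by linarith
  have hωI : IntervalIntegrable ω volume (-δ) δ :=
    (intervalIntegrable_iff_integrableOn_Icc_of_le hδ').2 hω
  have hω2I : IntervalIntegrable (fun ξ => ω ξ * ξ ^ 2) volume (-δ) δ :=
    (intervalIntegrable_iff_integrableOn_Icc_of_le hδ').2 hω2
  have hrate : ∀ t, HasDerivAt (fun s => ∫ x, (x - x₀) ^ 2 * c x s)
      (C * ∫ ξ in (-δ)..δ, ω ξ * ξ ^ 2) t := fun t => by
    have h := hdiff t
    rwa [integral_sq_sub_mul_intervalIntegral_kernel hδ' (hωI.mul_continuousOn continuousOn_id)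
      hω2I (hint t) (hmom2 t) (hfub t), hmass, hconstraint, mul_zero, sub_zero] at h
  intro t
  rw [eq_add_mul_of_hasDerivAt_const hrate t]
  field_simp

/-- With a time-independent kernel satisfying the non-advective constraint, the mean
squared displacement of a solution of the nonlocal diffusion equation is affine in time. -/
theorem stmt_4 (δ : ℝ) (hδ : 0 < δ) (ω : ℝ → ℝ) (c : ℝ → ℝ → ℝ) (x₀ C : ℝ) (hC : 0 < C)
    (hω : IntegrableOn ω (Set.Icc (-δ) δ))
    (hω2 : IntegrableOn (fun ξ => ω ξ * ξ ^ 2) (Set.Icc (-δ) δ))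
    (hconstraint : (∫ ξ in (-δ)..δ, ω ξ * ξ) = 0)
    (hint : ∀ t, Integrable (fun x => c x t))
    (hmom2 : ∀ t, Integrable (fun x => (x - x₀) ^ 2 * c x t))
    (hmass : ∀ t, (∫ x, c x t) = C)
    (hpde : ∀ x t, HasDerivAt (fun s => c x s)
      (∫ ξ in (-δ)..δ, ω ξ * (c (x + ξ) t - c x t)) t)
    (hdiff : ∀ t, HasDerivAt (fun s => ∫ x, (x - x₀) ^ 2 * c x s)
      (∫ x, (x - x₀) ^ 2 * ∫ ξ in (-δ)..δ, ω ξ * (c (x + ξ) t - c x t)) t)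
    (hfub : ∀ t, IntegrableOn
      (fun p : ℝ × ℝ => (p.1 - x₀) ^ 2 * (ω p.2 * (c (p.1 + p.2) t - c p.1 t)))
      (Set.univ ×ˢ Set.Icc (-δ) δ)) :
    ∀ t : ℝ, (1 / C) * (∫ x, (x - x₀) ^ 2 * c x t) =
      (1 / C) * (∫ x, (x - x₀) ^ 2 * c x 0) + t * ∫ ξ in (-δ)..δ, ω ξ * ξ ^ 2 :=
  stmt_4_general δ hδ ω c x₀ C hC hω hω2 hconstraint hint hmom2 hmass hdiff hfub
end

section
/- Suppose c(·,t) solves the nonlocal diffusion equation with separable kernel ω(ξ,t) = φ(ξ) t^p for p > −1, where φ satisfies the non-advective constraint ∫_{-δ}^{δ} φ(ξ) ξ dξ = 0, and c has constant total mass C > 0. Then MSD(t) = MSD(0) + (t^{p+1}/(p+1)) · ∫_{-δ}^{δ} φ(ξ) ξ² dξ; in particular the mean squared displacement grows like t^{p+1}. -/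
/-! Multiplying the equation by `(x - x₀)²` and integrating, Fubini and translation invariance
of Lebesgue measure turn the inner `x`-integral for a fixed jump `ξ` into `ξ² C - 2 ξ m₁(t)`,
where `m₁` is the first moment about `x₀`. The non-advective constraint kills the `m₁` term, so
`d/dt ∫ (x - x₀)² c = C t^p ∫ φ ξ ξ²`; since `p > -1`, `t^p` is integrable at `0`, and the
fundamental theorem of calculus on `[0, t]` gives the formula. -/

open MeasureTheory intervalIntegral Real

lemma integrable_sub_mul_of_integrable_sub_sq_mul {f : ℝ → ℝ} {a : ℝ} (hf : Integrable f)
    (hf2 : Integrable fun x => (x - a) ^ 2 * f x) : Integrable fun x => (x - a) * f x := by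
  refine (hf.norm.add hf2.norm).mono'
    ((continuous_id.sub continuous_const).aestronglyMeasurable.mul hf.aestronglyMeasurable) ?_
  filter_upwards with x
  simp only [Real.norm_eq_abs, abs_mul, abs_pow, Pi.add_apply]
  nlinarith [sq_nonneg (|x - a| - 1), abs_nonneg (f x), abs_nonneg (x - a), sq_abs (x - a)]

lemma integral_sub_sq_mul_comp_add_sub {f : ℝ → ℝ} {a : ℝ} (hf : Integrable f)
    (hf2 : Integrable fun x => (x - a) ^ 2 * f x) (ξ : ℝ) :
    ∫ x, (x - a) ^ 2 * (f (x + ξ) - f x) =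
      ξ ^ 2 * (∫ x, f x) - 2 * ξ * ∫ x, (x - a) * f x := by
  have hf1 := integrable_sub_mul_of_integrable_sub_sq_mul hf hf2
  set g : ℝ → ℝ := fun y => (y - ξ - a) ^ 2 * f y
  have hg : Integrable g := by
    have h : Integrable fun y =>
        (y - a) ^ 2 * f y + (ξ ^ 2 * f y - 2 * ξ * ((y - a) * f y)) :=
      hf2.add ((hf.const_mul _).sub (hf1.const_mul _))
    refine h.congr (ae_of_all _ fun y => ?_)
    simp only [g]; ring
  calc ∫ x, (x - a) ^ 2 * (f (x + ξ) - f x)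
        = ∫ x, (g (x + ξ) - (x - a) ^ 2 * f x) := by
        congr 1; funext x; simp only [g, add_sub_cancel_right]; ring
    _ = (∫ y, g y) - ∫ y, (y - a) ^ 2 * f y := by
        rw [integral_sub (hg.comp_add_right ξ) hf2, integral_add_right_eq_self]
    _ = ∫ y, (g y - (y - a) ^ 2 * f y) := (integral_sub hg hf2).symm
    _ = ∫ y, (ξ ^ 2 * f y - 2 * ξ * ((y - a) * f y)) := by
        congr 1; funext y; simp only [g]; ring
    _ = _ := by
        rw [integral_sub (hf.const_mul _) (hf1.const_mul _), MeasureTheory.integral_const_mul,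
          MeasureTheory.integral_const_mul]

lemma integral_sub_sq_mul_nonlocal_diffusion {f φ : ℝ → ℝ} {a lo hi : ℝ} (hlohi : lo ≤ hi)
    (hf : Integrable f) (hf2 : Integrable fun x => (x - a) ^ 2 * f x)
    (hφ : IntegrableOn φ (Set.Icc lo hi))
    (hfub : IntegrableOn (fun q : ℝ × ℝ => (q.1 - a) ^ 2 * (φ q.2 * (f (q.1 + q.2) - f q.1)))
      (Set.univ ×ˢ Set.Icc lo hi)) :
    ∫ x, (x - a) ^ 2 * ∫ ξ in lo..hi, φ ξ * (f (x + ξ) - f x) =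
      (∫ x, f x) * (∫ ξ in lo..hi, φ ξ * ξ ^ 2) -
        2 * (∫ x, (x - a) * f x) * ∫ ξ in lo..hi, φ ξ * ξ := by
  have hIcc : ∀ g : ℝ → ℝ, ∫ ξ in lo..hi, g ξ = ∫ ξ in Set.Icc lo hi, g ξ := fun g => by
    rw [integral_of_le hlohi, integral_Icc_eq_integral_Ioc]
  have hφk : ∀ k : ℕ, IntegrableOn (fun ξ => φ ξ * ξ ^ k) (Set.Icc lo hi) := fun k =>
    hφ.mul_continuousOn (continuous_pow k).continuousOn isCompact_Icc
  have hprod : Integrable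
      (Function.uncurry fun x ξ => (x - a) ^ 2 * (φ ξ * (f (x + ξ) - f x)))
      ((volume : Measure ℝ).prod (volume.restrict (Set.Icc lo hi))) := by
    have h : (volume : Measure ℝ).prod (volume.restrict (Set.Icc lo hi)) =
        (volume : Measure (ℝ × ℝ)).restrict (Set.univ ×ˢ Set.Icc lo hi) := by
      rw [Measure.volume_eq_prod, ← Measure.prod_restrict, Measure.restrict_univ]
    exact h ▸ hfub
  simp only [hIcc]
  calc ∫ x, (x - a) ^ 2 * ∫ ξ in Set.Icc lo hi, φ ξ * (f (x + ξ) - f x)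
      = ∫ x, ∫ ξ in Set.Icc lo hi, (x - a) ^ 2 * (φ ξ * (f (x + ξ) - f x)) := by
        simp only [MeasureTheory.integral_const_mul]
    _ = ∫ ξ in Set.Icc lo hi, ∫ x, (x - a) ^ 2 * (φ ξ * (f (x + ξ) - f x)) :=
        integral_integral_swap hprod
    _ = ∫ ξ in Set.Icc lo hi, ((∫ x, f x) * (φ ξ * ξ ^ 2) -
          2 * (∫ x, (x - a) * f x) * (φ ξ * ξ ^ 1)) := by
        congr 1; funext ξ
        simp only [mul_left_comm _ (φ ξ), MeasureTheory.integral_const_mul,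
          integral_sub_sq_mul_comp_add_sub hf hf2]
        ring
    _ = _ := by
        rw [integral_sub ((hφk 2).const_mul _) ((hφk 1).const_mul _),
          MeasureTheory.integral_const_mul, MeasureTheory.integral_const_mul]
        simp only [pow_one]

lemma eq_add_rpow_mul_of_hasDerivAt {g : ℝ → ℝ} {p K : ℝ} (hp : -1 < p)
    (hg : ∀ s > 0, HasDerivAt g (s ^ p * K) s) (hg0 : ContinuousWithinAt g (Set.Ici 0) 0)
    {t : ℝ} (ht : 0 ≤ t) : g t = g 0 + t ^ (p + 1) / (p + 1) * K := by
  have hcont : ContinuousOn g (Set.Icc 0 t) := by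
    intro s hs
    rcases hs.1.eq_or_lt with rfl | hs0
    · exact hg0.mono Set.Icc_subset_Ici_self
    · exact (hg s hs0).continuousAt.continuousWithinAt
  have hftc := integral_eq_sub_of_hasDerivAt_of_le ht hcont (fun s hs => hg s hs.1)
    ((intervalIntegrable_rpow' hp).mul_const K)
  rw [intervalIntegral.integral_mul_const, integral_rpow (Or.inl hp),
    zero_rpow (by linarith), sub_zero] at hftc
  linarith

theorem stmt_5_general (δ : ℝ) (hδ : 0 < δ) (φ : ℝ → ℝ) (p : ℝ) (hp : -1 < p)
    (c : ℝ → ℝ → ℝ) (x₀ C : ℝ) (hC : 0 < C)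
    (hφ : IntegrableOn φ (Set.Icc (-δ) δ))
    (hconstraint : (∫ ξ in (-δ)..δ, φ ξ * ξ) = 0)
    (hint : ∀ t, Integrable (fun x => c x t))
    (hmom2 : ∀ t, Integrable (fun x => (x - x₀) ^ 2 * c x t))
    (hmass : ∀ t, (∫ x, c x t) = C)
    (hdiff : ∀ t > (0 : ℝ), HasDerivAt (fun s => ∫ x, (x - x₀) ^ 2 * c x s)
      (∫ x, (x - x₀) ^ 2 * (t ^ p * ∫ ξ in (-δ)..δ, φ ξ * (c (x + ξ) t - c x t))) t)
    (hfub : ∀ t > (0 : ℝ), IntegrableOn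
      (fun q : ℝ × ℝ => (q.1 - x₀) ^ 2 * (φ q.2 * (c (q.1 + q.2) t - c q.1 t)))
      (Set.univ ×ˢ Set.Icc (-δ) δ))
    (hcont : ContinuousWithinAt (fun t => (1 / C) * ∫ x, (x - x₀) ^ 2 * c x t)
      (Set.Ici 0) 0) :
    ∀ t : ℝ, 0 ≤ t → (1 / C) * (∫ x, (x - x₀) ^ 2 * c x t) =
      (1 / C) * (∫ x, (x - x₀) ^ 2 * c x 0) +
        (t ^ (p + 1) / (p + 1)) * ∫ ξ in (-δ)..δ, φ ξ * ξ ^ 2 := by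
  intro t ht
  refine eq_add_rpow_mul_of_hasDerivAt hp (fun s hs => ?_) hcont ht
  have hmoment := integral_sub_sq_mul_nonlocal_diffusion (by linarith) (hint s) (hmom2 s)
    hφ (hfub s hs)
  rw [hmass s, hconstraint, mul_zero, sub_zero] at hmoment
  have hvalue :
      (1 / C) * ∫ x, (x - x₀) ^ 2 * (s ^ p * ∫ ξ in (-δ)..δ, φ ξ * (c (x + ξ) s - c x s)) =
      s ^ p * ∫ ξ in (-δ)..δ, φ ξ * ξ ^ 2 := by
    simp only [mul_left_comm _ (s ^ p), MeasureTheory.integral_const_mul, hmoment]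
    field_simp
  exact ((hdiff s hs).const_mul (1 / C)).congr_deriv hvalue

/-- With a separable dynamic kernel ω(ξ,t) = φ(ξ) t^p (p > −1) satisfying the
non-advective constraint, the mean squared displacement grows like t^(p+1). -/
theorem stmt_5 (δ : ℝ) (hδ : 0 < δ) (φ : ℝ → ℝ) (p : ℝ) (hp : -1 < p)
    (c : ℝ → ℝ → ℝ) (x₀ C : ℝ) (hC : 0 < C)
    (hφ : IntegrableOn φ (Set.Icc (-δ) δ))
    (hφ2 : IntegrableOn (fun ξ => φ ξ * ξ ^ 2) (Set.Icc (-δ) δ))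
    (hconstraint : (∫ ξ in (-δ)..δ, φ ξ * ξ) = 0)
    (hint : ∀ t, Integrable (fun x => c x t))
    (hmom2 : ∀ t, Integrable (fun x => (x - x₀) ^ 2 * c x t))
    (hmass : ∀ t, (∫ x, c x t) = C)
    (hpde : ∀ x : ℝ, ∀ t > (0 : ℝ), HasDerivAt (fun s => c x s)
      (t ^ p * ∫ ξ in (-δ)..δ, φ ξ * (c (x + ξ) t - c x t)) t)
    (hdiff : ∀ t > (0 : ℝ), HasDerivAt (fun s => ∫ x, (x - x₀) ^ 2 * c x s)
      (∫ x, (x - x₀) ^ 2 * (t ^ p * ∫ ξ in (-δ)..δ, φ ξ * (c (x + ξ) t - c x t))) t)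
    (hfub : ∀ t > (0 : ℝ), IntegrableOn
      (fun q : ℝ × ℝ => (q.1 - x₀) ^ 2 * (φ q.2 * (c (q.1 + q.2) t - c q.1 t)))
      (Set.univ ×ˢ Set.Icc (-δ) δ))
    (hcont : ContinuousWithinAt (fun t => (1 / C) * ∫ x, (x - x₀) ^ 2 * c x t)
      (Set.Ici 0) 0) :
    ∀ t : ℝ, 0 ≤ t → (1 / C) * (∫ x, (x - x₀) ^ 2 * c x t) =
      (1 / C) * (∫ x, (x - x₀) ^ 2 * c x 0) +
        (t ^ (p + 1) / (p + 1)) * ∫ ξ in (-δ)..δ, φ ξ * ξ ^ 2 :=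
  stmt_5_general δ hδ φ p hp c x₀ C hC hφ hconstraint hint hmom2 hmass hdiff hfub hcont
end
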